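/- Define the triangular function ∇ : ℝ → ℝ by ∇(t) = t for 0 < t ≤ 1, ∇(t) = 2 − t for 1 < t ≤ 2, and ∇(t) = 0 otherwise. For a positive integer η, a real number c with 0 < c < 1, and positive integers n, m, define A(n,m) := (1/η) ∫_0^η ∇(n − 1 − t − c) · ∇(m − 1 − t − c) dt. Then for every positive integer η, A(η+2, η+3) = A(η+3, η+2) = (3c² − 2c³) / (6η). (Equation (25): the boundary off-diagonal entry of the averaged timing-offset outer product.) -/
import Mathlib


/-- The triangular pulse: ∇(t) = t for 0 < t ≤ 1, 2 − t for 1 < t ≤ 2, 0 otherwise. -/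
noncomputable def tri (t : ℝ) : ℝ :=
  if 0 < t ∧ t ≤ 1 then t else if 1 < t ∧ t ≤ 2 then 2 - t else 0

/-- The (n,m) entry of the averaged timing-offset outer product E[U(Δτ)U(Δτ)ᴴ], when the
normalized timing offset is uniform on [0,η] and the normalized LoS path delay is c. -/
noncomputable def Aent (η : ℕ) (c : ℝ) (n m : ℕ) : ℝ :=
  (1 / (η : ℝ)) * ∫ t in (0:ℝ)..(η : ℝ), tri ((n : ℝ) - 1 - t - c) * tri ((m : ℝ) - 1 - t - c)

lemma tri_eq_max (t : ℝ) : tri t = max 0 (min t (2 - t)) := by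
  unfold tri
  split_ifs with h1 h2
  · rw [min_eq_left (by linarith [h1.2]), max_eq_right (le_of_lt h1.1)]
  · rw [min_eq_right (by linarith [h2.1]), max_eq_right (by linarith [h2.2])]
  · push_neg at h1 h2
    rcases le_or_gt t 0 with h | h
    · rw [min_eq_left (by linarith), max_eq_left (by linarith)]
    · have ht2 := h2 (h1 h)
      rw [min_eq_right (by linarith), max_eq_left (by linarith)]

lemma tri_continuous : Continuous tri := by
  have : tri = fun t => max 0 (min t (2 - t)) := funext tri_eq_max
  rw [this]
  exact continuous_const.max (continuous_id.min (by continuity))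

lemma tri_of_ge_two {x : ℝ} (h : 2 ≤ x) : tri x = 0 := by
  unfold tri; split_ifs with h1 h2
  · linarith [h1.2]
  · linarith [h2.2]
  · rfl

lemma tri_of_le_one {x : ℝ} (h0 : 0 < x) (h1 : x ≤ 1) : tri x = x := by
  unfold tri; rw [if_pos ⟨h0, h1⟩]

lemma tri_of_mid {x : ℝ} (h1 : 1 < x) (h2 : x ≤ 2) : tri x = 2 - x := by
  unfold tri
  rw [if_neg (by push_neg; intro _; linarith), if_pos ⟨h1, h2⟩]

lemma key_integral (b c : ℝ) (hb : 1 ≤ b) (hc0 : 0 < c) (hc1 : c < 1) :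
    ∫ t in (0:ℝ)..b, tri (b + 1 - t - c) * tri (b + 2 - t - c)
      = c ^ 2 / 2 - c ^ 3 / 3 := by
  have hcont : Continuous fun t : ℝ => tri (b + 1 - t - c) * tri (b + 2 - t - c) := by
    apply Continuous.mul <;> exact tri_continuous.comp (by continuity)
  have hbc : (0:ℝ) ≤ b - c := by linarith
  have h1 : IntervalIntegrable (fun t : ℝ => tri (b + 1 - t - c) * tri (b + 2 - t - c))
      MeasureTheory.volume 0 (b - c) := hcont.intervalIntegrable _ _
  have h2 : IntervalIntegrable (fun t : ℝ => tri (b + 1 - t - c) * tri (b + 2 - t - c))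
      MeasureTheory.volume (b - c) b := hcont.intervalIntegrable _ _
  rw [← intervalIntegral.integral_add_adjacent_intervals h1 h2]
  have e1 : ∫ t in (0:ℝ)..(b - c), tri (b + 1 - t - c) * tri (b + 2 - t - c) = 0 := by
    rw [intervalIntegral.integral_congr (g := fun _ => (0:ℝ))]
    · simp
    · intro t ht
      rw [Set.uIcc_of_le hbc] at ht
      have : tri (b + 2 - t - c) = 0 := tri_of_ge_two (by linarith [ht.2])
      simp [this]
  have e2 : ∫ t in (b - c)..b, tri (b + 1 - t - c) * tri (b + 2 - t - c)
      = c ^ 2 / 2 - c ^ 3 / 3 := by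
    rw [intervalIntegral.integral_congr
        (g := fun t => (1 - (t - (b - c))) * (t - (b - c)))]
    · have := intervalIntegral.integral_comp_sub_right
        (a := b - c) (b := b) (fun u => (1 - u) * u) (b - c)
      simp only [sub_self] at this
      rw [this]
      have hsub : b - (b - c) = c := by ring
      rw [hsub]
      have : ∀ u : ℝ, (1 - u) * u = u - u ^ 2 := fun u => by ring
      simp only [this]
      rw [intervalIntegral.integral_sub intervalIntegral.intervalIntegrable_id
          (intervalIntegral.intervalIntegrable_pow 2),
        integral_id, integral_pow]
      norm_num
    · intro t ht
      rw [Set.uIcc_of_le (by linarith : b - c ≤ b)] at ht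
      obtain ⟨hl, hr⟩ := ht
      have t1 : tri (b + 1 - t - c) = b + 1 - t - c :=
        tri_of_le_one (by linarith) (by linarith)
      have t2 : tri (b + 2 - t - c) = 2 - (b + 2 - t - c) :=
        tri_of_mid (by linarith) (by linarith)
      dsimp only
      rw [t1, t2]; ring
  rw [e1, e2]; ring

/-- Equation (25): the boundary off-diagonal entries. -/
theorem Aent_boundary_offdiag (η : ℕ) (hη : 0 < η) (c : ℝ) (hc0 : 0 < c) (hc1 : c < 1) :
    Aent η c (η + 2) (η + 3) = (3 * c ^ 2 - 2 * c ^ 3) / (6 * (η : ℝ)) ∧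
    Aent η c (η + 3) (η + 2) = (3 * c ^ 2 - 2 * c ^ 3) / (6 * (η : ℝ)) := by
  have hb : (1:ℝ) ≤ (η : ℝ) := by exact_mod_cast hη
  have hb0 : (η : ℝ) ≠ 0 := by positivity
  have key := key_integral (η : ℝ) c hb hc0 hc1
  have cast1 : ∀ t : ℝ, ((η + 2 : ℕ) : ℝ) - 1 - t - c = (η : ℝ) + 1 - t - c := by
    intro t; push_cast; ring
  have cast2 : ∀ t : ℝ, ((η + 3 : ℕ) : ℝ) - 1 - t - c = (η : ℝ) + 2 - t - c := by
    intro t; push_cast; ring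
  constructor
  · unfold Aent
    simp only [cast1, cast2]
    rw [key]
    field_simp
    ring
  · unfold Aent
    simp only [cast1, cast2, mul_comm]
    rw [key]
    field_simp
    ring
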